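/- Let a > 0. The function h ↦ 1_{h>0}·(2πh)^{−1/2}·exp(a − (h + a²/h)/2) is a probability density on ℝ, and the pushforward of the corresponding probability measure under the map h ↦ a/h is the inverse Gaussian distribution with parameter (a,1), i.e. the measure on ℝ with density g ↦ 1_{g>0}·√(a/(2πg³))·exp(−a(g−1)²/(2g)). -/

import Mathlib

open MeasureTheory Set
open scoped ENNReal

noncomputable section

namespace StmtAux

lemma lintegral_image_eq {s : Set ℝ} {f f' : ℝ → ℝ} (hs : MeasurableSet s)
    (hf' : ∀ x ∈ s, HasDerivWithinAt f (f' x) s x) (hf : InjOn f s) (g : ℝ → ℝ≥0∞) :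
    ∫⁻ x in f '' s, g x = ∫⁻ x in s, ENNReal.ofReal |f' x| * g (f x) := by
  simpa only [ContinuousLinearMap.det_toSpanSingleton] using
    lintegral_image_eq_lintegral_abs_det_fderiv_mul volume hs
      (fun x hx => (hf' x hx).hasFDerivWithinAt) hf g

lemma hasDerivAt_const_div (a : ℝ) {t : ℝ} (ht : t ≠ 0) :
    HasDerivAt (fun y : ℝ => a / y) (-(a / t ^ 2)) t := by
  simpa [div_eq_mul_inv, mul_neg] using (hasDerivAt_inv ht).const_mul a

lemma hasDerivAt_phi (a : ℝ) {t : ℝ} (ht : t ≠ 0) :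
    HasDerivAt (fun y : ℝ => y - a / y) (1 + a / t ^ 2) t := by
  simpa [sub_neg_eq_add, Pi.sub_def] using (hasDerivAt_id' t).sub (hasDerivAt_const_div a ht)

lemma image_phi {a : ℝ} (ha : 0 < a) :
    (fun t : ℝ => t - a / t) '' Ioi 0 = univ := by
  apply eq_univ_of_forall
  intro u
  have hsq : 0 ≤ u ^ 2 + 4 * a := by nlinarith [sq_nonneg u]
  set r := Real.sqrt (u ^ 2 + 4 * a) with hrdef
  have hr2 : r ^ 2 = u ^ 2 + 4 * a := Real.sq_sqrt hsq
  have h1 : |u| < r := by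
    rw [hrdef, ← Real.sqrt_sq_eq_abs]
    exact Real.sqrt_lt_sqrt (sq_nonneg u) (by linarith)
  have ht : 0 < (u + r) / 2 := by
    have := neg_abs_le u
    linarith
  refine ⟨(u + r) / 2, ht, ?_⟩
  have hne : (u + r) / 2 ≠ 0 := ne_of_gt ht
  show (u + r) / 2 - a / ((u + r) / 2) = u
  have hd : a / ((u + r) / 2) = (u + r) / 2 - u := by
    rw [div_eq_iff hne]; nlinarith [hr2]
  rw [hd]; ring

lemma injOn_phi {a : ℝ} (ha : 0 < a) : InjOn (fun t : ℝ => t - a / t) (Ioi 0) := by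
  intro x hx y hy h
  simp only [mem_Ioi] at hx hy
  have hx0 : x ≠ 0 := ne_of_gt hx
  have hy0 : y ≠ 0 := ne_of_gt hy
  field_simp at h
  have key : (x - y) * (x * y + a) = 0 := by nlinarith [h]
  rcases mul_eq_zero.mp key with h1 | h2
  · linarith
  · nlinarith [mul_pos hx hy]


lemma image_inv_div {a : ℝ} (ha : 0 < a) :
    (fun t : ℝ => a / t) '' Ioi 0 = Ioi 0 := by
  ext u
  simp only [mem_image, mem_Ioi]
  constructor
  · rintro ⟨t, ht, rfl⟩; positivity
  · intro hu
    exact ⟨a / u, by positivity, by field_simp⟩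

lemma injOn_inv_div {a : ℝ} (ha : 0 < a) : InjOn (fun t : ℝ => a / t) (Ioi 0) := by
  intro x hx y hy h
  simp only [mem_Ioi] at hx hy
  field_simp at h
  linarith

lemma image_sq : (fun t : ℝ => t ^ 2) '' Ioi 0 = Ioi 0 := by
  ext u
  simp only [mem_image, mem_Ioi]
  constructor
  · rintro ⟨t, ht, rfl⟩; positivity
  · intro hu
    exact ⟨Real.sqrt u, Real.sqrt_pos.mpr hu, Real.sq_sqrt hu.le⟩

lemma injOn_sq : InjOn (fun t : ℝ => t ^ 2) (Ioi 0) := by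
  intro x hx y hy h
  simp only [mem_Ioi] at hx hy
  have h' : x ^ 2 = y ^ 2 := h
  nlinarith

lemma lintegral_gaussian' :
    ∫⁻ x : ℝ, ENNReal.ofReal (Real.exp (-(x ^ 2 / 2)))
      = ENNReal.ofReal (Real.sqrt (2 * Real.pi)) := by
  have hi : Integrable (fun x : ℝ => Real.exp (-(1/2 : ℝ) * x ^ 2)) :=
    integrable_exp_neg_mul_sq (by norm_num)
  have heq : ∀ x : ℝ, -(x ^ 2 / 2) = -(1/2 : ℝ) * x ^ 2 := fun x => by ring
  simp only [heq]
  rw [← ofReal_integral_eq_lintegral_ofReal hi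
    (Filter.Eventually.of_forall fun x => (Real.exp_pos _).le),
    integral_gaussian]
  norm_num [mul_comm]

lemma indicator_eq (F : ℝ → ℝ) :
    (fun h : ℝ => ENNReal.ofReal (if 0 < h then F h else 0))
      = (Ioi (0:ℝ)).indicator fun h => ENNReal.ofReal (F h) := by
  funext h
  simp only [indicator_apply, mem_Ioi]
  split_ifs <;> simp



lemma two_J {a : ℝ} (ha : 0 < a) :
    ∫⁻ t in Ioi (0:ℝ), ENNReal.ofReal (Real.exp (-((t - a / t) ^ 2 / 2)))
      = ENNReal.ofReal (Real.sqrt (2 * Real.pi) / 2) := by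
  have mg : Measurable fun t : ℝ => ENNReal.ofReal (Real.exp (-((t - a / t) ^ 2 / 2))) := by
    fun_prop
  set J := ∫⁻ t in Ioi (0:ℝ), ENNReal.ofReal (Real.exp (-((t - a / t) ^ 2 / 2))) with hJ
  set B := ∫⁻ t in Ioi (0:ℝ), ENNReal.ofReal (a / t ^ 2)
      * ENNReal.ofReal (Real.exp (-((t - a / t) ^ 2 / 2))) with hB
  have hA : ENNReal.ofReal (Real.sqrt (2 * Real.pi)) = J + B := by
    have h1 := lintegral_image_eq (f := fun t : ℝ => t - a / t) (f' := fun t => 1 + a / t ^ 2)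
      measurableSet_Ioi (fun t ht => (hasDerivAt_phi a (ne_of_gt ht)).hasDerivWithinAt)
      (injOn_phi ha) (fun u => ENNReal.ofReal (Real.exp (-(u ^ 2 / 2))))
    rw [image_phi ha, Measure.restrict_univ, lintegral_gaussian'] at h1
    rw [h1]
    have h2 : ∫⁻ t in Ioi (0:ℝ), ENNReal.ofReal |1 + a / t ^ 2|
        * ENNReal.ofReal (Real.exp (-((t - a / t) ^ 2 / 2)))
        = ∫⁻ t in Ioi (0:ℝ), (ENNReal.ofReal (Real.exp (-((t - a / t) ^ 2 / 2)))
          + ENNReal.ofReal (a / t ^ 2) * ENNReal.ofReal (Real.exp (-((t - a / t) ^ 2 / 2)))) := by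
      apply setLIntegral_congr_fun measurableSet_Ioi
      intro t ht
      have ht : (0:ℝ) < t := ht
      dsimp only
      rw [abs_of_pos (by positivity), ENNReal.ofReal_add (by norm_num) (by positivity),
        ENNReal.ofReal_one, add_mul, one_mul]
    rw [h2, lintegral_add_left mg]
  have hBJ : B = J := by
    have h1 := lintegral_image_eq (f := fun t : ℝ => a / t) (f' := fun t => -(a / t ^ 2))
      measurableSet_Ioi (fun t ht => (hasDerivAt_const_div a (ne_of_gt ht)).hasDerivWithinAt)
      (injOn_inv_div ha) (fun u => ENNReal.ofReal (Real.exp (-((u - a / u) ^ 2 / 2))))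
    rw [image_inv_div ha] at h1
    rw [hB, hJ, h1]
    apply setLIntegral_congr_fun measurableSet_Ioi
    intro t ht
    have ht : (0:ℝ) < t := ht
    dsimp only
    have e1 : a / t - a / (a / t) = -(t - a / t) := by
      have ha' : a ≠ 0 := ne_of_gt ha
      have ht' : t ≠ 0 := ne_of_gt ht
      field_simp
      ring
    rw [abs_neg, abs_of_pos (by positivity : (0:ℝ) < a / t ^ 2), e1, neg_sq]
  have hle : J ≤ ENNReal.ofReal (Real.sqrt (2 * Real.pi)) := hA ▸ le_self_add
  have hfin : J ≠ ⊤ := (lt_of_le_of_lt hle ENNReal.ofReal_lt_top).ne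
  rw [hBJ] at hA
  have h3 := congrArg ENNReal.toReal hA
  rw [ENNReal.toReal_add hfin hfin, ENNReal.toReal_ofReal (Real.sqrt_nonneg _)] at h3
  have h4 : J.toReal = Real.sqrt (2 * Real.pi) / 2 := by linarith
  rw [← h4, ENNReal.ofReal_toReal hfin]

lemma lintegral_if_pos (F : ℝ → ℝ) :
    ∫⁻ h : ℝ, ENNReal.ofReal (if 0 < h then F h else 0)
      = ∫⁻ h in Ioi (0:ℝ), ENNReal.ofReal (F h) := by
  rw [indicator_eq]
  exact lintegral_indicator measurableSet_Ioi _

lemma rpow_neg_half {x : ℝ} (hx : 0 ≤ x) :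
    x ^ (-(1 / 2) : ℝ) = (Real.sqrt x)⁻¹ := by
  rw [Real.rpow_neg hx, ← Real.sqrt_eq_rpow]

lemma lintegral_density {a : ℝ} (ha : 0 < a) :
    ∫⁻ h : ℝ, ENNReal.ofReal (if 0 < h then (2 * Real.pi * h) ^ (-(1 / 2) : ℝ)
        * Real.exp (a - (h + a ^ 2 / h) / 2) else 0) = 1 := by
  have hπ := Real.pi_pos
  have hs2π : (0:ℝ) < Real.sqrt (2 * Real.pi) := Real.sqrt_pos.mpr (by positivity)
  rw [lintegral_if_pos, ← image_sq,
    lintegral_image_eq measurableSet_Ioi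
      (fun t ht => by simpa using (hasDerivAt_pow 2 t).hasDerivWithinAt)
      injOn_sq]
  have h2 : ∫⁻ t in Ioi (0:ℝ), ENNReal.ofReal |2 * t|
      * ENNReal.ofReal ((2 * Real.pi * t ^ 2) ^ (-(1 / 2) : ℝ)
        * Real.exp (a - (t ^ 2 + a ^ 2 / t ^ 2) / 2))
      = ∫⁻ t in Ioi (0:ℝ), ENNReal.ofReal (2 / Real.sqrt (2 * Real.pi))
        * ENNReal.ofReal (Real.exp (-((t - a / t) ^ 2 / 2))) := by
    apply setLIntegral_congr_fun measurableSet_Ioi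
    intro t ht
    have ht : (0:ℝ) < t := ht
    dsimp only
    rw [← ENNReal.ofReal_mul (by positivity), ← ENNReal.ofReal_mul (by positivity)]
    congr 1
    have hexp : a - (t ^ 2 + a ^ 2 / t ^ 2) / 2 = -((t - a / t) ^ 2 / 2) := by
      field_simp
      ring
    have hco : (2 * Real.pi * t ^ 2) ^ (-(1 / 2) : ℝ) = (Real.sqrt (2 * Real.pi) * t)⁻¹ := by
      rw [rpow_neg_half (by positivity), Real.sqrt_mul (by positivity), Real.sqrt_sq ht.le]
    rw [hexp, hco, abs_of_pos (by positivity : (0:ℝ) < 2 * t)]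
    field_simp
  rw [h2, lintegral_const_mul _ (by fun_prop), two_J ha, ← ENNReal.ofReal_mul (by positivity)]
  have hone : 2 / Real.sqrt (2 * Real.pi) * (Real.sqrt (2 * Real.pi) / 2) = 1 := by
    field_simp
  rw [hone, ENNReal.ofReal_one]

lemma setLintegral_if_pos (F : ℝ → ℝ) (t : Set ℝ) :
    ∫⁻ h in t, ENNReal.ofReal (if 0 < h then F h else 0)
      = ∫⁻ h in Ioi (0:ℝ) ∩ t, ENNReal.ofReal (F h) := by
  rw [indicator_eq, ← Measure.restrict_restrict measurableSet_Ioi]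
  exact lintegral_indicator measurableSet_Ioi _

lemma preimage_inter {a : ℝ} (ha : 0 < a) (s : Set ℝ) :
    Ioi (0:ℝ) ∩ (fun h : ℝ => a / h) ⁻¹' s = (fun g : ℝ => a / g) '' (s ∩ Ioi 0) := by
  ext h
  simp only [mem_inter_iff, mem_preimage, mem_image, mem_Ioi]
  constructor
  · rintro ⟨hh, hhs⟩
    refine ⟨a / h, ⟨hhs, by positivity⟩, ?_⟩
    field_simp
  · rintro ⟨g, ⟨hgs, hg⟩, rfl⟩
    refine ⟨by positivity, ?_⟩
    have hgg : a / (a / g) = g := by field_simp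
    rw [hgg]; exact hgs

lemma density_eq {a g : ℝ} (ha : 0 < a) (hg : 0 < g) :
    ENNReal.ofReal |(-(a / g ^ 2))| * ENNReal.ofReal ((2 * Real.pi * (a / g)) ^ (-(1 / 2) : ℝ)
        * Real.exp (a - (a / g + a ^ 2 / (a / g)) / 2))
      = ENNReal.ofReal (Real.sqrt (a / (2 * Real.pi * g ^ 3))
        * Real.exp (-(a * (g - 1) ^ 2 / (2 * g)))) := by
  have hπ := Real.pi_pos
  rw [abs_neg, abs_of_pos (by positivity : (0:ℝ) < a / g ^ 2),
    ← ENNReal.ofReal_mul (by positivity)]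
  congr 1
  have hexp : a - (a / g + a ^ 2 / (a / g)) / 2 = -(a * (g - 1) ^ 2 / (2 * g)) := by
    field_simp
    ring
  have hco : (2 * Real.pi * (a / g)) ^ (-(1 / 2) : ℝ) = Real.sqrt (g / (2 * Real.pi * a)) := by
    rw [rpow_neg_half (by positivity), ← Real.sqrt_inv]
    congr 1
    field_simp
  have h1 : a / (2 * Real.pi * g ^ 3) = (a / g ^ 2) ^ 2 * (g / (2 * Real.pi * a)) := by
    field_simp
  rw [hexp, hco, h1, Real.sqrt_mul (sq_nonneg _), Real.sqrt_sq (by positivity : (0:ℝ) ≤ a / g ^ 2)]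
  ring

end StmtAux

open StmtAux

/-- The inverse Gaussian distribution with parameter `(a, 1)`. -/
def invGaussian (a : ℝ) : Measure ℝ :=
  volume.withDensity fun s =>
    ENNReal.ofReal
      (if 0 < s then Real.sqrt (a / (2 * Real.pi * s ^ 3))
          * Real.exp (-(a * (s - 1) ^ 2 / (2 * s)))
        else 0)

theorem stmt16 (a : ℝ) (ha : 0 < a) :
    IsProbabilityMeasure
        (volume.withDensity fun h : ℝ =>
          ENNReal.ofReal
            (if 0 < h then (2 * Real.pi * h) ^ (-(1 / 2) : ℝ)
                * Real.exp (a - (h + a ^ 2 / h) / 2)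
              else 0)) ∧
      Measure.map (fun h : ℝ => a / h)
          (volume.withDensity fun h : ℝ =>
            ENNReal.ofReal
              (if 0 < h then (2 * Real.pi * h) ^ (-(1 / 2) : ℝ)
                  * Real.exp (a - (h + a ^ 2 / h) / 2)
                else 0))
        = invGaussian a := by
  constructor
  · constructor
    rw [withDensity_apply _ MeasurableSet.univ, Measure.restrict_univ]
    exact lintegral_density ha
  · have hφ : Measurable fun h : ℝ => a / h := measurable_const.div measurable_id
    apply Measure.ext
    intro s hs
    rw [Measure.map_apply hφ hs, withDensity_apply _ (hφ hs), invGaussian,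
      withDensity_apply _ hs, setLintegral_if_pos, setLintegral_if_pos,
      preimage_inter ha s,
      lintegral_image_eq (hs.inter measurableSet_Ioi)
        (fun g hg => (hasDerivAt_const_div a (ne_of_gt hg.2)).hasDerivWithinAt)
        ((injOn_inv_div ha).mono inter_subset_right) _]
    rw [inter_comm (Ioi (0:ℝ)) s]
    apply setLIntegral_congr_fun (hs.inter measurableSet_Ioi)
    intro g hg
    exact density_eq ha hg.2

end
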